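/- arXiv:2209.12032 — 5 statements merged into one kernel-verified Lean document; each statement's English description precedes it below -/
import Mathlib

section
/- Let g ∈ GL(V) be an element of finite order d, where V is an n-dimensional complex vector space. If there is a constant C such that every eigenvalue α of g satisfies [ℚ(α):ℚ] ≤ C, then d ≤ 2^n · C^(2n). -/
/-!
An element of finite order is annihilated by the separable polynomial `X ^ d - 1`, hence is
diagonalisable, so its order divides the product of the orders of its at most `n` distinct
eigenvalues. An eigenvalue of order `k` generates a field of degree `φ k` over `ℚ`, and
`k ≤ 2 φ(k)²`, so each of these orders is at most `2 C²`.
-/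

open Polynomial
open scoped Nat

namespace Nat

theorem prime_pow_le_totient_sq {p : ℕ} (hp : p.Prime) (hp2 : p ≠ 2) (k : ℕ) :
    p ^ k ≤ φ (p ^ k) ^ 2 := by
  cases k with
  | zero => simp
  | succ k =>
    have hp_le : p ≤ (p - 1) ^ 2 := by
      have := hp.two_le.lt_of_ne' hp2
      zify [hp.one_le]; nlinarith
    rw [totient_prime_pow_succ hp, pow_succ, mul_pow]
    exact Nat.mul_le_mul (Nat.le_self_pow two_ne_zero _) hp_le

theorem two_pow_le_two_mul_totient_sq (k : ℕ) : 2 ^ k ≤ 2 * φ (2 ^ k) ^ 2 := by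
  cases k with
  | zero => simp
  | succ k =>
    rw [totient_prime_pow_succ prime_two, Nat.add_one_sub_one, mul_one, ← pow_mul, ← pow_succ']
    exact Nat.pow_le_pow_right two_pos (by omega)

theorem le_totient_sq_of_odd {m : ℕ} (hm : Odd m) : m ≤ φ m ^ 2 := by
  induction m using Nat.recOnPrimeCoprime with
  | zero => simp at hm
  | prime_pow p k hp =>
    rcases k.eq_zero_or_pos with rfl | hk
    · simp
    · refine prime_pow_le_totient_sq hp ?_ k
      rintro rfl
      exact absurd ((Nat.odd_pow_iff hk.ne').mp hm) (by decide)
  | coprime a b _ _ hab iha ihb =>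
    obtain ⟨ha, hb⟩ := Nat.odd_mul.mp hm
    rw [totient_mul hab, mul_pow]
    exact Nat.mul_le_mul (iha ha) (ihb hb)

theorem le_two_mul_totient_sq (m : ℕ) : m ≤ 2 * φ m ^ 2 := by
  rcases eq_or_ne m 0 with rfl | hm
  · simp
  obtain ⟨k, o, ho, rfl⟩ := exists_eq_two_pow_mul_odd hm
  rw [totient_mul ((Nat.coprime_two_left.mpr ho).pow_left k), mul_pow, ← mul_assoc]
  exact Nat.mul_le_mul (two_pow_le_two_mul_totient_sq k) (le_totient_sq_of_odd ho)

end Nat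

namespace Module.End

variable {K V : Type*} [Field K] [AddCommGroup V] [Module K V]

theorem HasEigenvalue.pow_eq_one {f : End K V} {μ : K} {d : ℕ} (hμ : f.HasEigenvalue μ)
    (hf : f ^ d = 1) : μ ^ d = 1 := by
  obtain ⟨v, hv⟩ := hμ.exists_hasEigenvector
  have h := hv.pow_apply d
  rw [hf, one_apply] at h
  exact (smul_left_injective K hv.2 (h.symm.trans (one_smul K v).symm))

variable [FiniteDimensional K V]

theorem exists_finset_forall_mem_iff_hasEigenvalue (f : End K V) :
    ∃ S : Finset K, S.card ≤ finrank K V ∧ ∀ μ, μ ∈ S ↔ f.HasEigenvalue μ := by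
  classical
  refine ⟨f.charpoly.roots.toFinset, ?_, fun μ => ?_⟩
  · calc _ ≤ Multiset.card f.charpoly.roots := Multiset.toFinset_card_le _
      _ ≤ f.charpoly.natDegree := card_roots' _
      _ = finrank K V := f.charpoly_natDegree
  · rw [Multiset.mem_toFinset, mem_roots f.charpoly_monic.ne_zero,
      hasEigenvalue_iff_isRoot_charpoly]

variable [IsAlgClosed K]

theorem aeval_eq_zero_of_forall_hasEigenvalue {f : End K V} {p q : K[X]} (hp : p.Separable)
    (hpf : aeval f p = 0) (hq : ∀ μ, f.HasEigenvalue μ → q.IsRoot μ) : aeval f q = 0 := by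
  rcases eq_or_ne q 0 with rfl | hq0
  · simp
  -- `minpoly K f ∣ p` has simple roots, namely the eigenvalues of `f`
  have hnodup : (minpoly K f).roots.Nodup := nodup_roots (hp.of_dvd (minpoly.dvd K f hpf))
  refine minpoly.dvd_iff.mp ((IsAlgClosed.splits _).dvd_of_roots_le_roots
    (minpoly.ne_zero (LinearMap.isIntegral f))
    ((Multiset.le_iff_subset hnodup).mpr fun μ hμ => ?_))
  exact (mem_roots hq0).mpr (hq μ (hasEigenvalue_iff_isRoot.mpr (isRoot_of_mem_roots hμ)))

theorem pow_eq_one_of_forall_hasEigenvalue {f : End K V} {d m : ℕ} (hd : (d : K) ≠ 0)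
    (hfd : f ^ d = 1) (hm : ∀ μ, f.HasEigenvalue μ → μ ^ m = 1) : f ^ m = 1 := by
  have h := aeval_eq_zero_of_forall_hasEigenvalue (f := f) (q := X ^ m - 1)
    (X_pow_sub_one_separable_iff.mpr hd) (by simp [hfd]) (fun μ hμ => by simp [hm μ hμ])
  simpa [sub_eq_zero] using h

end Module.End

theorem finrank_adjoin_eq_totient_orderOf {K : Type*} [Field K] [CharZero K] {α : K}
    (hα : IsOfFinOrder α) :
    Module.finrank ℚ (IntermediateField.adjoin ℚ {α}) = φ (orderOf α) := by
  have hprim := IsPrimitiveRoot.orderOf α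
  rw [IntermediateField.adjoin.finrank (hprim.isIntegral hα.orderOf_pos).tower_top,
    ← cyclotomic_eq_minpoly_rat hprim hα.orderOf_pos, natDegree_cyclotomic]

theorem bounded_element_order (V : Type*) [AddCommGroup V] [Module ℂ V]
    [FiniteDimensional ℂ V] (n : ℕ) (hn : 1 ≤ n) (hdim : Module.finrank ℂ V = n)
    (g : V ≃ₗ[ℂ] V) (d C : ℕ) (hd : 0 < d) (hord : orderOf g = d)
    (hC : ∀ α : ℂ, Module.End.HasEigenvalue (↑g : V →ₗ[ℂ] V) α →
      Module.finrank ℚ ↥(IntermediateField.adjoin ℚ {α}) ≤ C) :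
    d ≤ 2 ^ n * C ^ (2 * n) := by
  set f : Module.End ℂ V := (g : V →ₗ[ℂ] V)
  have hf_order : orderOf f = d := hord ▸ orderOf_injective
    LinearEquiv.automorphismGroup.toLinearMapMonoidHom LinearEquiv.toLinearMap_injective g
  have hfd : f ^ d = 1 := hf_order ▸ pow_orderOf_eq_one f
  have hfin : ∀ α, f.HasEigenvalue α → IsOfFinOrder α := fun α hα =>
    isOfFinOrder_iff_pow_eq_one.mpr ⟨d, hd, hα.pow_eq_one hfd⟩
  have htotient : ∀ α, f.HasEigenvalue α → φ (orderOf α) ≤ C := fun α hα =>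
    finrank_adjoin_eq_totient_orderOf (hfin α hα) ▸ hC α hα
  have horder : ∀ α, f.HasEigenvalue α → orderOf α ≤ 2 * C ^ 2 := fun α hα =>
    (Nat.le_two_mul_totient_sq _).trans (by grw [htotient α hα])
  have hC_pos : 0 < C := by
    have : Nontrivial V := Module.nontrivial_of_finrank_pos (hdim ▸ hn)
    obtain ⟨α, hα⟩ := f.exists_eigenvalue
    exact (Nat.totient_pos.mpr (hfin α hα).orderOf_pos).trans_le (htotient α hα)
  obtain ⟨S, hS_card, hS⟩ := f.exists_finset_forall_mem_iff_hasEigenvalue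
  have hfP : f ^ ∏ α ∈ S, orderOf α = 1 :=
    Module.End.pow_eq_one_of_forall_hasEigenvalue (by exact_mod_cast hd.ne') hfd fun α hα =>
      orderOf_dvd_iff_pow_eq_one.mp (Finset.dvd_prod_of_mem _ ((hS α).mpr hα))
  calc d ≤ ∏ α ∈ S, orderOf α :=
        Nat.le_of_dvd (Finset.prod_pos fun α hα => (hfin α ((hS α).mp hα)).orderOf_pos)
          (hf_order ▸ orderOf_dvd_of_pow_eq_one hfP)
    _ ≤ (2 * C ^ 2) ^ S.card :=
        Finset.prod_le_pow_card S _ _ fun α hα => horder α ((hS α).mp hα)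
    _ ≤ (2 * C ^ 2) ^ n := Nat.pow_le_pow_right (by positivity) (hdim ▸ hS_card)
    _ = 2 ^ n * C ^ (2 * n) := by rw [mul_pow, ← pow_mul]
end

section
/- Suppose 1 → G₁ → G → G₂ → 1 is an exact sequence of groups and G₂ has bounded finite subgroups (i.e., there is a constant C such that every finite subgroup of G₂ has order at most C). Then G is Jordan if and only if G₁ is Jordan. -/
def HasBoundedFiniteSubgroups (Γ : Type*) [Group Γ] : Prop :=
  ∃ C : ℕ, ∀ H : Subgroup Γ, Finite H → Nat.card H ≤ C

def IsJordanGroup (Γ : Type*) [Group Γ] : Prop :=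
  ∃ J : ℕ, ∀ H : Subgroup Γ, Finite H →
    ∃ A : Subgroup H, A.Normal ∧ (∀ a b : A, a * b = b * a) ∧ A.index ≤ J

/-!
For a finite `H ≤ G`, the kernel of `g` restricted to `H` has index `|g(H)| ≤ C` and embeds in
`G₁`; if `J` is a Jordan constant of `G₁`, it therefore contains an abelian subgroup `A` of index
at most `J * C` in `H`. The normal core of `A` in `H` is normal and abelian, of index at most
`(J * C)!`. Conversely, subgroups of Jordan groups are Jordan.
-/

open Subgroup
open scoped Nat

def HasNormalAbelianSubgroupOfIndexLE (X : Type*) [Group X] (J : ℕ) : Prop :=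
  ∃ A : Subgroup X, A.Normal ∧ IsMulCommutative A ∧ A.index ≤ J

theorem isJordanGroup_iff {Γ : Type*} [Group Γ] :
    IsJordanGroup Γ ↔ ∃ J, ∀ H : Subgroup Γ, Finite H → HasNormalAbelianSubgroupOfIndexLE H J := by
  simp only [IsJordanGroup, HasNormalAbelianSubgroupOfIndexLE, isMulCommutative_iff]

/-- The normal core is the kernel of the action of `X` on `X ⧸ B`. -/
theorem Subgroup.index_normalCore_le_factorial {X : Type*} [Group X] (B : Subgroup X)
    [B.FiniteIndex] : B.normalCore.index ≤ B.index ! := by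
  rw [normalCore_eq_ker, index_ker, index_eq_card, ← Nat.card_perm]
  exact card_le_card_group _

namespace HasNormalAbelianSubgroupOfIndexLE

theorem of_mulEquiv {X Y : Type*} [Group X] [Group Y] (e : X ≃* Y) {J : ℕ}
    (h : HasNormalAbelianSubgroupOfIndexLE X J) : HasNormalAbelianSubgroupOfIndexLE Y J := by
  obtain ⟨A, hA, hcomm, hidx⟩ := h
  exact ⟨A.map (e : X →* Y), hA.map _ e.surjective, inferInstance, by rwa [index_map_equiv]⟩

theorem of_subgroup {X : Type*} [Group X] [Finite X] {K : Subgroup X} {J C : ℕ}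
    (h : HasNormalAbelianSubgroupOfIndexLE K J) (hK : K.index ≤ C) :
    HasNormalAbelianSubgroupOfIndexLE X (J * C)! := by
  obtain ⟨A, -, hcomm, hidx⟩ := h
  let B := A.map K.subtype
  refine ⟨B.normalCore, B.normalCore_normal, ?_, ?_⟩
  · exact .of_setLike_mul_comm fun a ha b hb =>
      setLike_mul_comm (B.normalCore_le ha) (B.normalCore_le hb)
  · calc B.normalCore.index ≤ B.index ! := B.index_normalCore_le_factorial
      _ = (A.index * K.index)! := by rw [index_map_subtype]
      _ ≤ (J * C)! := Nat.factorial_le (Nat.mul_le_mul hidx hK)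

end HasNormalAbelianSubgroupOfIndexLE

namespace IsJordanGroup

universe u

theorem exists_forall_of_injective {Γ : Type*} [Group Γ] (h : IsJordanGroup Γ) :
    ∃ J, ∀ (X : Type u) [Group X] [Finite X] (f : X →* Γ), Function.Injective f →
      HasNormalAbelianSubgroupOfIndexLE X J := by
  obtain ⟨J, hJ⟩ := isJordanGroup_iff.mp h
  refine ⟨J, fun X _ _ f hf => ?_⟩
  have : Finite f.range := .of_surjective _ f.rangeRestrict_surjective
  exact (hJ f.range this).of_mulEquiv (MonoidHom.ofInjective hf).symm

theorem of_injective {X Γ : Type*} [Group X] [Group Γ] (f : X →* Γ) (hf : Function.Injective f)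
    (h : IsJordanGroup Γ) : IsJordanGroup X := by
  obtain ⟨J, hJ⟩ := h.exists_forall_of_injective
  exact isJordanGroup_iff.mpr ⟨J, fun H _ => hJ H (f.comp H.subtype) (hf.comp H.subtype_injective)⟩

theorem of_ker {G Q : Type*} [Group G] [Group Q] (f : G →* Q) (hQ : HasBoundedFiniteSubgroups Q)
    (h : IsJordanGroup f.ker) : IsJordanGroup G := by
  obtain ⟨J, hJ⟩ := h.exists_forall_of_injective
  obtain ⟨C, hC⟩ := hQ
  refine isJordanGroup_iff.mpr ⟨(J * C)!, fun H _ => ?_⟩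
  let fH := f.comp H.subtype
  have hindex : fH.ker.index ≤ C := by
    rw [index_ker]
    exact hC _ (.of_surjective _ fH.rangeRestrict_surjective)
  let ι : fH.ker →* f.ker := (H.subtype.comp fH.ker.subtype).codRestrict f.ker fun x => x.2
  have hι : Function.Injective ι := fun a b hab =>
    Subtype.ext (Subtype.ext (congrArg (fun x : f.ker => (x : G)) hab))
  exact (hJ fH.ker ι hι).of_subgroup hindex

end IsJordanGroup

theorem jordan_iff_of_exact_general {G₁ G G₂ : Type*} [Group G₁] [Group G] [Group G₂]
    (f : G₁ →* G) (g : G →* G₂) (hf : Function.Injective f)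
    (hexact : g.ker = f.range)
    (hbfs : HasBoundedFiniteSubgroups G₂) :
    IsJordanGroup G ↔ IsJordanGroup G₁ := by
  let e : G₁ ≃* g.ker := (MonoidHom.ofInjective hf).trans (MulEquiv.subgroupCongr hexact.symm)
  exact ⟨IsJordanGroup.of_injective f hf, fun h =>
    (h.of_injective e.symm.toMonoidHom e.symm.injective).of_ker g hbfs⟩

theorem jordan_iff_of_exact {G₁ G G₂ : Type*} [Group G₁] [Group G] [Group G₂]
    (f : G₁ →* G) (g : G →* G₂) (hf : Function.Injective f)
    (hg : Function.Surjective g) (hexact : g.ker = f.range)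
    (hbfs : HasBoundedFiniteSubgroups G₂) :
    IsJordanGroup G ↔ IsJordanGroup G₁ :=
  jordan_iff_of_exact_general f g hf hexact hbfs
end

section
/- The group GLₙ(ℤ) has bounded finite subgroups: there exists a constant C(n) such that every finite subgroup of GLₙ(ℤ) has order at most C(n). (Minkowski's theorem.) -/
open Matrix Finset

variable {n : ℕ}

lemma dvd_mul_entries {d e : ℤ} {A B : Matrix (Fin n) (Fin n) ℤ}
    (hA : ∀ i j, d ∣ A i j) (hB : ∀ i j, e ∣ B i j) :
    ∀ i j, d * e ∣ (A * B) i j := by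
  intro i j
  rw [Matrix.mul_apply]
  exact Finset.dvd_sum fun k _ => mul_dvd_mul (hA i k) (hB k j)

lemma dvd_pow_entries {d : ℤ} {A : Matrix (Fin n) (Fin n) ℤ}
    (hA : ∀ i j, d ∣ A i j) : ∀ m : ℕ, 1 ≤ m → ∀ i j, d ^ m ∣ (A ^ m) i j := by
  intro m
  induction m with
  | zero => omega
  | succ m ih =>
    intro _ i j
    rcases Nat.eq_zero_or_pos m with h | h
    · subst h; simpa [pow_one] using hA i j
    · have := dvd_mul_entries (fun i j => ih h i j) hA i j
      simpa [pow_succ] using this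

lemma key_step {p : ℕ} (hp : p.Prime) {M : Matrix (Fin n) (Fin n) ℤ}
    (hM : (M + 1) ^ p = 1) {k : ℕ} (hk : 1 ≤ k)
    (h : ∀ i j, (3:ℤ) ^ k ∣ M i j) : ∀ i j, (3:ℤ) ^ (k+1) ∣ M i j := by
  have h1 : ∀ i j, (1 : Matrix (Fin n) (Fin n) ℤ) i j
      = ∑ m ∈ Finset.range (p+1), (M ^ m) i j * (p.choose m : ℤ) := by
    intro i j
    conv_lhs => rw [← hM, Commute.add_pow (Commute.one_right M)]
    simp only [Matrix.sum_apply]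
    refine Finset.sum_congr rfl fun m _ => ?_
    rw [one_pow, mul_one, ← Matrix.diagonal_natCast, Matrix.mul_diagonal]
  have h2 : ∀ i j, (p:ℤ) * M i j
      = - ∑ m ∈ Finset.Ico 2 (p+1), (M ^ m) i j * (p.choose m : ℤ) := by
    intro i j
    have hb := h1 i j
    rw [Finset.range_eq_Ico, Finset.sum_eq_sum_Ico_succ_bot (by omega : 0 < p+1),
        Finset.sum_eq_sum_Ico_succ_bot (by have := hp.two_le; omega : 1 < p+1)] at hb
    simp only [pow_zero, pow_one, Nat.choose_zero_right, Nat.choose_one_right,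
      Nat.cast_one, mul_one] at hb
    linarith
  intro i j
  rcases eq_or_ne p 3 with rfl | hp3
  · have h2' := h2 i j
    have hIco : Finset.Ico 2 4 = ({2, 3} : Finset ℕ) := by decide
    rw [hIco, Finset.sum_insert (by decide), Finset.sum_singleton] at h2'
    norm_num at h2'
    have e2 : (3:ℤ) ^ (k*2) ∣ (M ^ 2) i j := by
      rw [pow_mul]; exact dvd_pow_entries h 2 (by omega) i j
    have e3 : (3:ℤ) ^ (k*3) ∣ (M ^ 3) i j := by
      rw [pow_mul]; exact dvd_pow_entries h 3 (by omega) i j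
    have d2 : (3:ℤ) ^ (k+2) ∣ (M ^ 2) i j * 3 := by
      rw [pow_succ]
      exact mul_dvd_mul ((pow_dvd_pow (3:ℤ) (by omega)).trans e2) dvd_rfl
    have d3 : (3:ℤ) ^ (k+2) ∣ (M ^ 3) i j :=
      (pow_dvd_pow (3:ℤ) (by omega)).trans e3
    have dM : (3:ℤ) ^ (k+2) ∣ 3 * M i j := by
      rw [h2']
      exact dvd_add (dvd_neg.mpr d3) (dvd_neg.mpr d2)
    have : (3:ℤ) * 3 ^ (k+1) ∣ 3 * M i j := by
      rwa [show (3:ℤ) * 3 ^ (k+1) = 3 ^ (k+2) by ring]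
    exact (mul_dvd_mul_iff_left (by norm_num : (3:ℤ) ≠ 0)).mp this
  · have hS : (3:ℤ) ^ (k+1) ∣ ∑ m ∈ Finset.Ico 2 (p+1), (M ^ m) i j * (p.choose m : ℤ) := by
      refine Finset.dvd_sum fun m hm => ?_
      obtain ⟨hm2, -⟩ := Finset.mem_Ico.mp hm
      have e : (3:ℤ) ^ (k*m) ∣ (M ^ m) i j := by
        rw [pow_mul]; exact dvd_pow_entries h m (by omega) i j
      have hle : k + 1 ≤ k * m := by nlinarith
      exact dvd_mul_of_dvd_left ((pow_dvd_pow (3:ℤ) hle).trans e) _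
    have hdvd : (3:ℤ) ^ (k+1) ∣ (p:ℤ) * M i j := by
      rw [h2 i j]; exact dvd_neg.mpr hS
    have hcop : IsCoprime ((3:ℤ) ^ (k+1)) (p:ℤ) := by
      have : Nat.Coprime 3 p :=
        (Nat.coprime_primes Nat.prime_three hp).mpr (fun hh => hp3 hh.symm)
      have := Nat.Coprime.pow_left (k+1) this
      have := Nat.isCoprime_iff_coprime.mpr this
      push_cast at this
      exact this
    exact hcop.dvd_of_dvd_mul_left hdvd

lemma unipotent_torsion {p : ℕ} (hp : p.Prime) {A : Matrix (Fin n) (Fin n) ℤ}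
    (hA : A ^ p = 1) (h : ∀ i j, (3:ℤ) ∣ (A - 1) i j) : A = 1 := by
  set M := A - 1 with hMdef
  have hM : (M + 1) ^ p = 1 := by rw [hMdef, sub_add_cancel]; exact hA
  have hall : ∀ k : ℕ, 1 ≤ k → ∀ i j, (3:ℤ) ^ k ∣ M i j := by
    intro k
    induction k with
    | zero => omega
    | succ k ih =>
      intro _
      rcases Nat.eq_zero_or_pos k with rfl | hk
      · simpa using h
      · exact key_step hp hM hk (ih hk)
  have hM0 : M = 0 := by
    ext i j
    by_contra hne
    obtain ⟨k, hk⟩ := pow_unbounded_of_one_lt (|M i j|) (by norm_num : (1:ℤ) < 3)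
    have hd := hall (k+1) (by omega) i j
    have h1 : (3:ℤ) ^ (k+1) ≤ |M i j| :=
      Int.le_of_dvd (abs_pos.mpr hne) ((dvd_abs _ _).mpr hd)
    have h2 : (3:ℤ) ^ k ≤ 3 ^ (k+1) := pow_le_pow_right₀ (by norm_num) (by omega)
    simp only [Matrix.zero_apply] at hne
    linarith
  have : A - 1 = 0 := hM0
  rw [sub_eq_zero] at this
  exact this

theorem minkowski_bfs (n : ℕ) :
    ∃ C : ℕ, ∀ H : Subgroup (GL (Fin n) ℤ), Finite H → Nat.card H ≤ C := by
  classical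
  refine ⟨Nat.card (GL (Fin n) (ZMod 3)), fun H hH => ?_⟩
  set φ : GL (Fin n) ℤ →* GL (Fin n) (ZMod 3) :=
    Units.map (RingHom.mapMatrix (Int.castRingHom (ZMod 3))).toMonoidHom with hφ
  have hker : ∀ x : H, φ (x : GL (Fin n) ℤ) = 1 → x = 1 := by
    intro x hx
    by_contra hne
    have hfin : 0 < orderOf x := by
      haveI := hH
      exact orderOf_pos x
    have hm1 : orderOf x ≠ 1 := fun hh => hne (orderOf_eq_one_iff.mp hh)
    obtain ⟨p, hp, hpd⟩ := Nat.exists_prime_and_dvd hm1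
    set y : H := x ^ (orderOf x / p) with hy
    have hyp : y ^ p = 1 := by
      rw [hy, ← pow_mul, Nat.div_mul_cancel hpd, pow_orderOf_eq_one]
    have hy_ne : y ≠ 1 := by
      intro hone
      have hdv : orderOf x ∣ orderOf x / p := orderOf_dvd_of_pow_eq_one hone
      have hlt : orderOf x / p < orderOf x :=
        Nat.div_lt_self hfin hp.one_lt
      have h0 := Nat.eq_zero_of_dvd_of_lt hdv hlt
      have hp0 : 0 < orderOf x / p := Nat.div_pos (Nat.le_of_dvd hfin hpd) hp.pos
      omega
    -- the image of y under φ is 1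
    have hφy : φ ((y : H) : GL (Fin n) ℤ) = 1 := by
      have : ((y : H) : GL (Fin n) ℤ) = ((x : GL (Fin n) ℤ)) ^ (orderOf x / p) := by
        rw [hy]; push_cast; rfl
      rw [this, map_pow, hx, one_pow]
    -- matrix-level consequences
    have hmat : ((y : GL (Fin n) ℤ) : Matrix (Fin n) (Fin n) ℤ) ^ p = 1 := by
      have : ((y ^ p : H) : GL (Fin n) ℤ) = 1 := by rw [hyp]; rfl
      have h2 : ((y : GL (Fin n) ℤ)) ^ p = 1 := by
        rw [← this]; push_cast; rfl
      have := congrArg Units.val h2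
      simpa using this
    have hdvd3 : ∀ i j, (3:ℤ) ∣ ((((y : GL (Fin n) ℤ) : Matrix (Fin n) (Fin n) ℤ)) - 1) i j := by
      have hval := congrArg Units.val hφy
      have hmap : ((y : GL (Fin n) ℤ) : Matrix (Fin n) (Fin n) ℤ).map
          (Int.cast : ℤ → ZMod 3) = 1 := hval
      intro i j
      have hzero : (((((y : GL (Fin n) ℤ) : Matrix (Fin n) (Fin n) ℤ)) - 1).map
          (Int.cast : ℤ → ZMod 3)) = 0 := by
        have := (Int.castRingHom (ZMod 3)).mapMatrix.map_sub
          (((y : GL (Fin n) ℤ) : Matrix (Fin n) (Fin n) ℤ)) 1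
        simp only [RingHom.mapMatrix_apply, Int.coe_castRingHom] at this
        rw [this, hmap]
        simp
      have := congrFun (congrFun hzero i) j
      rw [Matrix.map_apply] at this
      exact (ZMod.intCast_zmod_eq_zero_iff_dvd _ 3).mp this
    have := unipotent_torsion hp hmat hdvd3
    exact hy_ne (by
      apply Subtype.ext
      apply Units.ext
      simpa using this)
  have hinj : Function.Injective (fun x : H => φ (x : GL (Fin n) ℤ)) := by
    intro a b hab
    have h1 : φ (((a * b⁻¹ : H) : GL (Fin n) ℤ)) = 1 := by
      push_cast
      simp only at hab
      rw [_root_.map_mul, _root_.map_inv, hab]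
      simp
    have := hker _ h1
    rwa [mul_inv_eq_one] at this
  exact Nat.card_le_card_of_injective _ hinj
end

section
/- There exists a subgroup Γ of GL₂(ℂ) that has bounded finite subgroups (indeed, is free abelian, so its only finite subgroup is trivial), whose image in PGL₂(ℂ) contains finite cyclic subgroups of arbitrarily large order. -/
open Matrix

/-!
Γ is the image of the embedding `q ↦ diag(exp((1 + 2πi)q), exp q)` of `ℚ` into `GL₂(ℂ)`.
Being isomorphic to the torsion-free group `ℚ`, it has no nontrivial finite subgroup. The
matrix is scalar exactly when `exp(2πiq) = 1`, i.e. `q ∈ ℤ`, so the image of Γ in `PGL₂(ℂ)` is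
`ℚ/ℤ`, where the class of `1/m` has order `m`.
-/

open Complex Multiplicative
open scoped Real

theorem Subgroup.eq_bot_of_le_range_of_finite {G H : Type*} [Group G] [IsMulTorsionFree G]
    [Group H] {f : G →* H} (hf : Function.Injective f) {K : Subgroup H} (hK : K ≤ f.range)
    [Finite K] : K = ⊥ := by
  refine (Subgroup.eq_bot_iff_forall K).2 fun x hx ↦ ?_
  obtain ⟨y, rfl⟩ := hK hx
  have hfy : IsOfFinOrder (f y) := K.subtype.isOfFinOrder (isOfFinOrder_of_finite ⟨f y, hx⟩)
  rw [(isOfFinOrder_iff_eq_one y).1 (hf.isOfFinOrder_iff.1 hfy), map_one]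

theorem orderOf_map_ofAdd_inv_natCast {G : Type*} [Monoid G] {f : Multiplicative ℚ →* G}
    (hf : ∀ q : ℚ, f (ofAdd q) = 1 ↔ ∃ z : ℤ, q = z) {m : ℕ} (hm : 0 < m) :
    orderOf (f (ofAdd (m : ℚ)⁻¹)) = m := by
  have hpow (n : ℕ) : f (ofAdd (m : ℚ)⁻¹) ^ n = f (ofAdd ((n : ℚ) / m)) := by
    rw [← map_pow, ← ofAdd_nsmul, nsmul_eq_mul, div_eq_mul_inv]
  refine (orderOf_eq_iff hm).2 ⟨?_, fun n hnm hn hfn ↦ ?_⟩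
  · rw [hpow, div_self (by positivity), hf]
    exact ⟨1, by simp⟩
  · obtain ⟨z, hz⟩ := (hf _).1 (hpow n ▸ hfn)
    have hz0 : (0 : ℚ) < z := hz ▸ by positivity
    have hz1 : (z : ℚ) < 1 := hz ▸ (div_lt_one (by positivity)).2 (by exact_mod_cast hnm)
    norm_cast at hz0 hz1
    omega

section DiagonalExp

variable {n : Type*} [Fintype n] [DecidableEq n]

noncomputable def diagonalExp (w : n → ℂ) : Multiplicative ℚ →* GL n ℂ :=
  MonoidHom.toHomUnits
    { toFun q := diagonal fun i ↦ exp (w i * q.toAdd)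
      map_one' := by simp
      map_mul' q r := by simp [mul_add, exp_add] }

theorem diagonalExp_eq_one_iff (w : n → ℂ) (q : ℚ) :
    diagonalExp w (ofAdd q) = 1 ↔ ∀ i, exp (w i * q) = 1 := by
  rw [Units.ext_iff]
  simp [diagonalExp, funext_iff]

theorem diagonalExp_mem_center_iff (w : n → ℂ) (q : ℚ) :
    diagonalExp w (ofAdd q) ∈ Subgroup.center (GL n ℂ) ↔ ∃ c, ∀ i, exp (w i * q) = c := by
  rw [GeneralLinearGroup.mem_center_iff_val_mem_range_scalar]
  simp [diagonalExp, scalar_apply, diagonal_injective.eq_iff, funext_iff, eq_comm]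

end DiagonalExp

noncomputable def ratDiagonal : Multiplicative ℚ →* GL (Fin 2) ℂ :=
  diagonalExp ![1 + 2 * π * I, 1]

theorem ratDiagonal_injective : Function.Injective ratDiagonal := by
  refine (injective_iff_map_eq_one _).2 fun q hq ↦ ?_
  have h := (diagonalExp_eq_one_iff _ q.toAdd).1 hq 1
  simp only [cons_val_one, cons_val_fin_one, one_mul] at h
  rw [← ofReal_ratCast, ← ofReal_exp, ofReal_eq_one, Real.exp_eq_one_iff] at h
  exact_mod_cast h

theorem ratDiagonal_mem_center_iff (q : ℚ) :
    ratDiagonal (ofAdd q) ∈ Subgroup.center (GL (Fin 2) ℂ) ↔ ∃ z : ℤ, q = z := by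
  have h2pi : 2 * π * I ≠ 0 := by simp [Real.pi_ne_zero, I_ne_zero]
  simp only [ratDiagonal, diagonalExp_mem_center_iff, Fin.forall_fin_two, cons_val_zero,
    cons_val_one, cons_val_fin_one, one_mul, exists_eq_left']
  rw [add_mul, one_mul, exp_add, left_eq_mul₀ (exp_ne_zero _), exp_eq_one_iff]
  refine exists_congr fun z ↦ ?_
  rw [mul_comm, mul_left_inj' h2pi]
  norm_cast

theorem exists_bfs_subgroup_with_unbounded_image :
    ∃ Γ : Subgroup (GL (Fin 2) ℂ),
      (∀ H : Subgroup (GL (Fin 2) ℂ), H ≤ Γ → Finite H → H = ⊥) ∧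
      (∀ k : ℕ, ∃ g ∈ Subgroup.map
          (QuotientGroup.mk' (Subgroup.center (GL (Fin 2) ℂ))) Γ,
        0 < orderOf g ∧ k ≤ orderOf g) := by
  let proj := QuotientGroup.mk' (Subgroup.center (GL (Fin 2) ℂ))
  have hker (q : ℚ) : proj.comp ratDiagonal (ofAdd q) = 1 ↔ ∃ z : ℤ, q = z := by
    rw [MonoidHom.comp_apply, QuotientGroup.mk'_apply, QuotientGroup.eq_one_iff,
      ratDiagonal_mem_center_iff]
  refine ⟨ratDiagonal.range,
    fun H hH _ ↦ Subgroup.eq_bot_of_le_range_of_finite ratDiagonal_injective hH, fun k ↦ ?_⟩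
  have hord := orderOf_map_ofAdd_inv_natCast hker (by omega : 0 < k + 1)
  refine ⟨_, Subgroup.mem_map_of_mem proj ⟨ofAdd ((k + 1 : ℕ) : ℚ)⁻¹, rfl⟩, ?_⟩
  rw [← MonoidHom.comp_apply, hord]
  omega
end

section
/- Every linear algebraic group over a field of characteristic zero, in particular GLₙ(ℂ), is Jordan: there exists J = J(n) such that every finite subgroup G ⊆ GLₙ(ℂ) contains a normal abelian subgroup of index at most J. (Jordan's classical theorem.) -/
/-!
Frobenius–Bieberbach argument. Averaging a Hermitian form over a finite `H ≤ GLₙ(ℂ)` conjugates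
`H` into the unitary group, on which the Frobenius norm is bi-invariant. For unitary `x, y`,
`‖[x, y] - 1‖ ≤ 2 ‖x - 1‖ ‖y - 1‖`, so commutators with an element near `1` are nearer to `1`
still; and if `[x, y]` commutes with `x` and `‖y - 1‖ < 1` then `[x, y] = 1`. A minimal
counterexample then shows that the elements within `1/2` of `1` commute pairwise, so they generate
an abelian normal subgroup. Distinct cosets of it have representatives at distance at least `1/2`
in the compact unitary group, so their number is bounded by the size of a `1/4`-net.
-/

open Matrix

open scoped commutatorElement

attribute [local instance] frobeniusNormedAddCommGroup frobeniusNormedSpace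

theorem commutatorElement_pow_mul {Γ : Type*} [Group Γ] {x y : Γ} (h : Commute x ⁅x, y⁆) (k : ℕ) :
    ⁅x, y⁆ ^ k * y = x ^ k * y * (x ^ k)⁻¹ := by
  induction k with
  | zero => simp
  | succ k ih =>
    calc ⁅x, y⁆ ^ (k + 1) * y = ⁅x, y⁆ ^ k * x * y * x⁻¹ := by
          rw [pow_succ, commutatorElement_def]; group
      _ = x * (⁅x, y⁆ ^ k * y) * x⁻¹ := by rw [← (h.pow_right k).eq]; group
      _ = x ^ (k + 1) * y * (x ^ (k + 1))⁻¹ := by rw [ih]; group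

theorem Subgroup.index_le_of_cover {Γ X : Type*} [Group Γ] [PseudoMetricSpace X] {A : Subgroup Γ}
    {f : Γ → X} {t : Set X} [Finite t] {ε : ℝ} (ht : ∀ g, ∃ p ∈ t, dist (f g) p < ε)
    (hA : ∀ g h, dist (f g) (f h) < 2 * ε → g⁻¹ * h ∈ A) : A.index ≤ Nat.card t := by
  choose p hpt hp using ht
  refine Nat.card_le_card_of_injective (fun q : Γ ⧸ A => ⟨p q.out, hpt _⟩) fun q q' hqq => ?_
  rw [← QuotientGroup.out_eq' q, ← QuotientGroup.out_eq' q', QuotientGroup.eq]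
  apply hA
  calc dist (f q.out) (f q'.out) ≤ dist (f q.out) (p q.out) + dist (f q'.out) (p q'.out) := by
        rw [show p q.out = p q'.out from congrArg Subtype.val hqq]
        exact dist_triangle_right _ _ _
    _ < 2 * ε := by linarith [hp q.out, hp q'.out]

namespace MonoidHom

variable {G A : Type*} [Group G] [Fintype G] [Ring A] (𝕜 : Type*) [Field 𝕜]
  [Algebra 𝕜 A] (ψ : G →* A)

noncomputable def average : A := (Fintype.card G : 𝕜)⁻¹ • ∑ g, ψ g

theorem apply_average_of_forall [CharZero 𝕜] {M : Type*} [AddCommGroup M] [Module 𝕜 M]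
    (f : A →ₗ[𝕜] M) {v : M} (hf : ∀ g, f (ψ g) = v) : f (ψ.average 𝕜) = v := by
  rw [average, map_smul, map_sum]
  simp only [hf, Finset.sum_const, Finset.card_univ, ← Nat.cast_smul_eq_nsmul 𝕜, smul_smul]
  rw [inv_mul_cancel₀ (Nat.cast_ne_zero.2 Fintype.card_ne_zero), one_smul]

theorem map_mul_average (g : G) : ψ g * ψ.average 𝕜 = ψ.average 𝕜 := by
  rw [average, mul_smul_comm, Finset.mul_sum]
  congr 1
  exact Fintype.sum_equiv (Equiv.mulLeft g) _ _ fun h => (map_mul ψ g h).symm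

theorem isIdempotentElem_average [CharZero 𝕜] : IsIdempotentElem (ψ.average 𝕜) :=
  ψ.apply_average_of_forall 𝕜 (LinearMap.mulRight 𝕜 (ψ.average 𝕜)) (ψ.map_mul_average 𝕜)

theorem star_average [StarRing 𝕜] [StarRing A] [StarModule 𝕜 A]
    (hψ : ∀ g, star (ψ g) = ψ g⁻¹) : star (ψ.average 𝕜) = ψ.average 𝕜 := by
  rw [average, star_smul, star_inv₀, star_natCast, star_sum]
  congr 1
  exact Fintype.sum_equiv (Equiv.inv G) _ _ fun g => hψ g

end MonoidHom

namespace Matrix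

variable {m n 𝕜 : Type*} [Fintype m] [Fintype n] [RCLike 𝕜]

theorem frobenius_norm_eq_sqrt (A : Matrix m n 𝕜) : ‖A‖ = √(∑ i, ∑ j, ‖A i j‖ ^ 2) := by
  rw [frobenius_norm_def, Real.sqrt_eq_rpow]
  norm_cast

theorem frobenius_norm_sq_eq_trace (A : Matrix m n 𝕜) :
    ((‖A‖ ^ 2 : ℝ) : 𝕜) = (Aᴴ * A).trace := by
  rw [frobenius_norm_eq_sqrt, Real.sq_sqrt (by positivity), Finset.sum_comm]
  simp only [trace, diag_apply, mul_apply, conjTranspose_apply, RCLike.star_def, RCLike.conj_mul]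
  push_cast
  rfl

theorem norm_trace_mul_le_frobenius (A : Matrix m n 𝕜) (B : Matrix n m 𝕜) :
    ‖(A * B).trace‖ ≤ ‖A‖ * ‖B‖ := by
  rw [← frobenius_norm_transpose B]
  calc ‖(A * B).trace‖ ≤ ∑ p : m × n, ‖A p.1 p.2‖ * ‖Bᵀ p.1 p.2‖ := by
        rw [Fintype.sum_prod_type]
        refine (norm_sum_le _ _).trans (Finset.sum_le_sum fun i _ => ?_)
        exact (norm_sum_le _ _).trans (Finset.sum_le_sum fun j _ => norm_mul_le _ _)
    _ ≤ ‖A‖ * ‖Bᵀ‖ := by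
        simpa only [frobenius_norm_eq_sqrt, Fintype.sum_prod_type] using
          Real.sum_mul_le_sqrt_mul_sqrt Finset.univ (fun p : m × n => ‖A p.1 p.2‖)
            (fun p => ‖Bᵀ p.1 p.2‖)

theorem frobenius_norm_unitary_mul [DecidableEq m] {U : Matrix m m 𝕜} (hU : U ∈ unitaryGroup m 𝕜)
    (A : Matrix m n 𝕜) : ‖U * A‖ = ‖A‖ := by
  have h : ((‖U * A‖ ^ 2 : ℝ) : 𝕜) = ((‖A‖ ^ 2 : ℝ) : 𝕜) := by
    rw [frobenius_norm_sq_eq_trace, frobenius_norm_sq_eq_trace, conjTranspose_mul,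
      Matrix.mul_assoc, ← Matrix.mul_assoc Uᴴ, ← star_eq_conjTranspose,
      Unitary.star_mul_self_of_mem hU, Matrix.one_mul]
  exact (pow_left_inj₀ (norm_nonneg _) (norm_nonneg _) two_ne_zero).1 (RCLike.ofReal_injective h)

theorem frobenius_norm_mul_unitary [DecidableEq n] (A : Matrix m n 𝕜) {U : Matrix n n 𝕜}
    (hU : U ∈ unitaryGroup n 𝕜) : ‖A * U‖ = ‖A‖ := by
  rw [← frobenius_norm_conjTranspose, conjTranspose_mul, ← star_eq_conjTranspose U,
    frobenius_norm_unitary_mul (Unitary.star_mem hU), frobenius_norm_conjTranspose]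

theorem frobenius_norm_of_mem_unitaryGroup [DecidableEq m] {U : Matrix m m 𝕜}
    (hU : U ∈ unitaryGroup m 𝕜) : ‖U‖ = √(Fintype.card m) := by
  have h : ((‖U‖ ^ 2 : ℝ) : 𝕜) = ((Fintype.card m : ℝ) : 𝕜) := by
    rw [frobenius_norm_sq_eq_trace, ← star_eq_conjTranspose, Unitary.star_mul_self_of_mem hU,
      trace_one]
    norm_cast
  rw [← RCLike.ofReal_injective h, Real.sqrt_sq (norm_nonneg _)]

theorem eq_zero_of_trace_mul_eq_zero [DecidableEq m] {Q Y : Matrix m m 𝕜} (hQ : Qᴴ = Q)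
    (hQQ : IsIdempotentElem Q) (hQY : (Q * Y).trace = 0) (hY : ‖Y - 1‖ < 1) : Q = 0 := by
  have htrace : ((‖Q‖ ^ 2 : ℝ) : 𝕜) = -(Q * (Y - 1)).trace := by
    rw [frobenius_norm_sq_eq_trace, hQ, hQQ.eq, mul_sub, trace_sub, hQY, mul_one, zero_sub,
      neg_neg]
  have hsq : ‖Q‖ ^ 2 ≤ ‖Q‖ * ‖Y - 1‖ := by
    calc ‖Q‖ ^ 2 = ‖(Q * (Y - 1)).trace‖ := by
          rw [← norm_neg (trace _), ← htrace, RCLike.norm_ofReal, abs_of_nonneg (by positivity)]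
      _ ≤ ‖Q‖ * ‖Y - 1‖ := norm_trace_mul_le_frobenius _ _
  have hle : ‖Q‖ ≤ ‖Q‖ ^ 2 := by
    calc ‖Q‖ = ‖Q * Q‖ := by rw [hQQ.eq]
      _ ≤ ‖Q‖ * ‖Q‖ := frobenius_norm_mul _ _
      _ = ‖Q‖ ^ 2 := (sq _).symm
  exact norm_le_zero_iff.1 (by nlinarith [norm_nonneg Q])

theorem isCompact_unitaryGroup [DecidableEq m] :
    IsCompact (unitaryGroup m 𝕜 : Set (Matrix m m 𝕜)) := by
  let _ : NormedRing (Matrix m m 𝕜) := frobeniusNormedRing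
  have : ProperSpace (Matrix m m 𝕜) := FiniteDimensional.proper 𝕜 _
  refine (isCompact_closedBall 0 √(Fintype.card m)).of_isClosed_subset isClosed_unitary
    fun U hU => ?_
  rw [Metric.mem_closedBall, dist_zero_right, frobenius_norm_of_mem_unitaryGroup hU]

end Matrix

section Unitarization

open scoped ComplexOrder MatrixOrder

variable {Γ ι 𝕜 : Type*} [Group Γ] [Finite Γ] [Fintype ι] [DecidableEq ι] [RCLike 𝕜]

theorem Matrix.exists_posDef_forall_star_mul_mul_eq (ρ : Γ →* GL ι 𝕜) :
    ∃ P : Matrix ι ι 𝕜, P.PosDef ∧ ∀ g, star (ρ g : Matrix ι ι 𝕜) * P * ρ g = P := by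
  classical
  have := Fintype.ofFinite Γ
  refine ⟨∑ g, star (ρ g : Matrix ι ι 𝕜) * ρ g, ?_, fun g => ?_⟩
  · rw [← Finset.add_sum_erase _ _ (Finset.mem_univ 1), map_one, Units.val_one, star_one,
      one_mul]
    exact PosDef.one.add_posSemidef
      (posSemidef_sum _ fun g _ => posSemidef_conjTranspose_mul_self _)
  · simp only [Finset.mul_sum, Finset.sum_mul]
    exact Fintype.sum_equiv (Equiv.mulRight g) _ _ fun h => by simp [mul_assoc]

theorem Matrix.exists_conj_mem_unitaryGroup (ρ : Γ →* GL ι 𝕜) :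
    ∃ S : GL ι 𝕜, ∀ g, (↑(S * ρ g * S⁻¹) : Matrix ι ι 𝕜) ∈ unitaryGroup ι 𝕜 := by
  obtain ⟨P, hP, hP_inv⟩ := exists_posDef_forall_star_mul_mul_eq ρ
  set S := CFC.sqrt P
  have hSS : S * S = P := CFC.sqrt_mul_sqrt_self P hP.posSemidef.nonneg
  have hS : star S = S := (CFC.sqrt_nonneg P).posSemidef.isHermitian
  have hSu : IsUnit S := (CFC.isUnit_sqrt_iff P hP.posSemidef.nonneg).2 hP.isUnit
  refine ⟨hSu.unit, fun g => ?_⟩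
  set T : Matrix ι ι 𝕜 := ↑hSu.unit⁻¹
  have hST : S * T = 1 := hSu.mul_val_inv
  have hTS : T * S = 1 := hSu.val_inv_mul
  have hT : star T = T := by
    calc star T = star T * (S * T) := by rw [hST, mul_one]
      _ = star (S * T) * T := by rw [star_mul, hS, mul_assoc]
      _ = T := by rw [hST, star_one, one_mul]
  rw [mem_unitaryGroup_iff']
  calc star (S * ρ g * T) * (S * ρ g * T)
      = T * (star (ρ g : Matrix ι ι 𝕜) * (S * S) * ρ g) * T := by
        simp only [star_mul, hS, hT, mul_assoc]
    _ = (T * S) * (S * T) := by rw [hSS, hP_inv, ← hSS]; simp only [mul_assoc]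
    _ = 1 := by rw [hST, hTS, one_mul]

end Unitarization

section UnitaryRepresentation

variable {Γ ι 𝕜 : Type*} [Group Γ] [Fintype ι] [DecidableEq ι] [RCLike 𝕜]
  {ψ : Γ →* Matrix ι ι 𝕜}

theorem norm_map_conj_sub_one (hψ : ∀ g, ψ g ∈ unitaryGroup ι 𝕜) (g h : Γ) :
    ‖ψ (h * g * h⁻¹) - 1‖ = ‖ψ g - 1‖ := by
  have : ψ (h * g * h⁻¹) - 1 = ψ h * (ψ g - 1) * ψ h⁻¹ := by
    rw [mul_sub, sub_mul, mul_one, ← map_mul, ← map_mul, ← map_mul, mul_inv_cancel, map_one]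
  rw [this, frobenius_norm_mul_unitary _ (hψ _), frobenius_norm_unitary_mul (hψ _)]

theorem norm_map_commutatorElement_sub_one_le (hψ : ∀ g, ψ g ∈ unitaryGroup ι 𝕜) (x y : Γ) :
    ‖ψ ⁅x, y⁆ - 1‖ ≤ 2 * ‖ψ x - 1‖ * ‖ψ y - 1‖ := by
  have h : ψ ⁅x, y⁆ - 1 =
      ((ψ x - 1) * (ψ y - 1) - (ψ y - 1) * (ψ x - 1)) * ψ (y * x)⁻¹ := by
    have : (ψ x - 1) * (ψ y - 1) - (ψ y - 1) * (ψ x - 1) = ψ (x * y) - ψ (y * x) := by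
      rw [map_mul, map_mul]; noncomm_ring
    rw [this, sub_mul, ← map_mul, ← map_mul, mul_inv_cancel, map_one, commutatorElement_def]
    congr 2; group
  rw [h, frobenius_norm_mul_unitary _ (hψ _)]
  calc _ ≤ ‖(ψ x - 1) * (ψ y - 1)‖ + ‖(ψ y - 1) * (ψ x - 1)‖ := norm_sub_le _ _
    _ ≤ ‖ψ x - 1‖ * ‖ψ y - 1‖ + ‖ψ y - 1‖ * ‖ψ x - 1‖ :=
        add_le_add (frobenius_norm_mul _ _) (frobenius_norm_mul _ _)
    _ = _ := by ring

/-- The averaging projector `e` of `⟨[x, y]⟩` satisfies `tr (e y) = tr y`, because the powers of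
`[x, y]` times `y` are conjugates of `y`; by `eq_zero_of_trace_mul_eq_zero` this forces `e = 1`. -/
theorem map_commutatorElement_eq_one [Finite Γ] (hψ : ∀ g, ψ g ∈ unitaryGroup ι 𝕜) {x y : Γ}
    (hx : Commute x ⁅x, y⁆) (hy : ‖ψ y - 1‖ < 1) : ψ ⁅x, y⁆ = 1 := by
  classical
  have := Fintype.ofFinite Γ
  set C := Subgroup.zpowers ⁅x, y⁆
  set e := (ψ.comp C.subtype).average 𝕜
  have htrace : (e * ψ y).trace = (ψ y).trace := by
    refine (ψ.comp C.subtype).apply_average_of_forall 𝕜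
      ((traceLinearMap ι 𝕜 𝕜).comp (LinearMap.mulRight 𝕜 (ψ y))) fun ⟨g, hg⟩ => ?_
    obtain ⟨k, rfl⟩ := mem_powers_iff_mem_zpowers.2 hg
    simp only [LinearMap.comp_apply, LinearMap.mulRight_apply, traceLinearMap_apply,
      MonoidHom.comp_apply, Subgroup.coe_subtype]
    rw [← map_mul, commutatorElement_pow_mul hx, map_mul, map_mul, trace_mul_cycle, ← map_mul,
      inv_mul_cancel, map_one, one_mul]
  have he : e = 1 := by
    refine (sub_eq_zero.1 (eq_zero_of_trace_mul_eq_zero ?_ ?_ ?_ hy)).symm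
    · rw [conjTranspose_sub, conjTranspose_one, ← star_eq_conjTranspose, MonoidHom.star_average]
      exact fun g => left_inv_eq_right_inv (Unitary.star_mul_self_of_mem (hψ g))
        (by rw [← map_mul, mul_inv_cancel, map_one])
    · exact (MonoidHom.isIdempotentElem_average 𝕜 _).one_sub
    · rw [sub_mul, one_mul, trace_sub, htrace, sub_self]
  calc ψ ⁅x, y⁆ = ψ ⁅x, y⁆ * e := by rw [he, mul_one]
    _ = 1 := by
      rw [← he]
      exact (ψ.comp C.subtype).map_mul_average 𝕜 ⟨_, Subgroup.mem_zpowers _⟩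

theorem commute_of_norm_map_sub_one_lt_half [Finite Γ] (hψ : ∀ g, ψ g ∈ unitaryGroup ι 𝕜)
    (hinj : Function.Injective ψ) {x y : Γ} (hx : ‖ψ x - 1‖ < 1 / 2) (hy : ‖ψ y - 1‖ < 1 / 2) :
    Commute x y := by
  by_contra hxy
  obtain ⟨⟨x, y⟩, ⟨hx, hy, hxy⟩, hmin⟩ :=
    (Set.toFinite {p : Γ × Γ | ‖ψ p.1 - 1‖ < 1 / 2 ∧ ‖ψ p.2 - 1‖ < 1 / 2 ∧ ¬Commute p.1 p.2}
      ).exists_minimalFor (fun p => ‖ψ p.1 - 1‖ + ‖ψ p.2 - 1‖) _ ⟨(x, y), hx, hy, hxy⟩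
  have hy_pos : 0 < ‖ψ y - 1‖ := by
    refine norm_pos_iff.2 (sub_ne_zero.2 fun h => hxy ?_)
    rw [hinj (h.trans (map_one ψ).symm)]
    exact Commute.one_right x
  have hc : ‖ψ ⁅x, y⁆ - 1‖ < ‖ψ y - 1‖ := by
    nlinarith [norm_map_commutatorElement_sub_one_le hψ x y]
  have hxc : Commute x ⁅x, y⁆ := by
    by_contra hxc
    have := hmin (j := (x, ⁅x, y⁆)) ⟨hx, hc.trans hy, hxc⟩ (by dsimp only; linarith)
    dsimp only at this
    linarith
  refine hxy (commutatorElement_eq_one_iff_commute.1 (hinj ?_))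
  rw [map_commutatorElement_eq_one hψ hxc (hy.trans (by norm_num)), map_one]

def nearOneSubgroup (ψ : Γ →* Matrix ι ι 𝕜) : Subgroup Γ :=
  Subgroup.closure {g | ‖ψ g - 1‖ < 1 / 2}

theorem nearOneSubgroup_normal (hψ : ∀ g, ψ g ∈ unitaryGroup ι 𝕜) :
    (nearOneSubgroup ψ).Normal := by
  have hconj : Group.conjugatesOfSet {g | ‖ψ g - 1‖ < 1 / 2} ⊆ {g | ‖ψ g - 1‖ < 1 / 2} := by
    intro g hg
    obtain ⟨a, ha, hag⟩ := Group.mem_conjugatesOfSet_iff.1 hg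
    obtain ⟨h, rfl⟩ := isConj_iff.1 hag
    simpa only [Set.mem_ofPred, norm_map_conj_sub_one hψ] using ha
  have : nearOneSubgroup ψ = Subgroup.normalClosure {g | ‖ψ g - 1‖ < 1 / 2} :=
    le_antisymm (Subgroup.closure_le _ |>.2 Subgroup.subset_normalClosure)
      (Subgroup.closure_mono hconj)
  rw [this]
  infer_instance

theorem nearOneSubgroup_isMulCommutative [Finite Γ] (hψ : ∀ g, ψ g ∈ unitaryGroup ι 𝕜)
    (hinj : Function.Injective ψ) : IsMulCommutative (nearOneSubgroup ψ) :=
  Subgroup.isMulCommutative_closure fun _ hx _ hy =>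
    (commute_of_norm_map_sub_one_lt_half hψ hinj hx hy).eq

theorem nearOneSubgroup_index_le (hψ : ∀ g, ψ g ∈ unitaryGroup ι 𝕜) {t : Set (Matrix ι ι 𝕜)}
    [Finite t] (ht : (unitaryGroup ι 𝕜 : Set (Matrix ι ι 𝕜)) ⊆ ⋃ p ∈ t, Metric.ball p (1 / 4)) :
    (nearOneSubgroup ψ).index ≤ Nat.card t := by
  refine Subgroup.index_le_of_cover (f := ψ) (ε := 1 / 4) (fun g => ?_)
    fun g h hgh => Subgroup.subset_closure ?_
  · simpa only [Set.mem_iUnion₂, Metric.mem_ball, exists_prop] using ht (hψ g)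
  · have : ψ g - ψ h = ψ g * (1 - ψ (g⁻¹ * h)) := by
      rw [mul_sub, mul_one, ← map_mul, mul_inv_cancel_left]
    rw [dist_eq_norm, this, frobenius_norm_unitary_mul (hψ g), norm_sub_rev] at hgh
    exact hgh.trans_eq (by norm_num)

end UnitaryRepresentation

theorem jordan_gl (n : ℕ) :
    ∃ J : ℕ, ∀ H : Subgroup (GL (Fin n) ℂ), Finite H →
      ∃ A : Subgroup H, A.Normal ∧ (∀ a b : A, a * b = b * a) ∧ A.index ≤ J := by
  obtain ⟨t, -, ht, hcover⟩ :=
    finite_cover_balls_of_compact (isCompact_unitaryGroup (m := Fin n) (𝕜 := ℂ))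
      (by norm_num : (0 : ℝ) < 1 / 4)
  have := ht.to_subtype
  refine ⟨Nat.card t, fun H _ => ?_⟩
  obtain ⟨S, hS⟩ := exists_conj_mem_unitaryGroup H.subtype
  let ψ : H →* Matrix (Fin n) (Fin n) ℂ :=
    (Units.coeHom _).comp ((MulAut.conj S).toMonoidHom.comp H.subtype)
  have hinj : Function.Injective ψ :=
    Units.val_injective.comp ((MulAut.conj S).injective.comp H.subtype_injective)
  have hψ : ∀ g, ψ g ∈ unitaryGroup (Fin n) ℂ := hS
  have := nearOneSubgroup_isMulCommutative hψ hinj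
  exact ⟨nearOneSubgroup ψ, nearOneSubgroup_normal hψ, Std.Commutative.comm,
    nearOneSubgroup_index_le hψ hcover⟩
end
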